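/- arXiv:1408.6292 — 3 statements merged into one kernel-verified Lean document; each statement's English description precedes it below -/
import Mathlib

section
/- In the LP minimizing ∑_c n_c / p(c) subject to ∑_c n_c = N, ∑_c n_c c ≤ B, n_c ≥ 0, if an optimal solution is supported on exactly two prices c₁ < c₂, then for every price c ∈ S and every t ∈ ℝ with c = t c₁ + (1-t) c₂, we have 1/p(c) ≥ t/p(c₁) + (1-t)/p(c₂); that is, the points (c₁, 1/p(c₁)) and (c₂, 1/p(c₂)) lie on the lower convex hull of the point set {(c, 1/p(c)) : c ∈ S}. -/
/-- Feasibility for the LP: minimize ∑_{c∈S} n_c / p(c) subject to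
    ∑ n_c = N, ∑ n_c c ≤ B, n_c ≥ 0. -/
def LPfeasible (S : Finset ℝ) (N B : ℝ) (n : ℝ → ℝ) : Prop :=
  (∀ c ∈ S, 0 ≤ n c) ∧ (∑ c ∈ S, n c = N) ∧ (∑ c ∈ S, n c * c ≤ B)

/-- If an optimal LP solution is supported on exactly two prices c₁ < c₂,
    then (c₁, 1/p(c₁)) and (c₂, 1/p(c₂)) lie on the lower convex hull of
    {(c, 1/p(c)) : c ∈ S}: for every c ∈ S and t ∈ ℝ with c = t c₁ + (1-t) c₂,
    1/p(c) ≥ t/p(c₁) + (1-t)/p(c₂). -/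
theorem lp_support_on_convex_hull (S : Finset ℝ) (hS : ∀ c ∈ S, 0 < c)
    (p : ℝ → ℝ) (hp : ∀ c ∈ S, 0 < p c ∧ p c ≤ 1)
    (N B : ℝ) (hN : 0 < N) (hB : 0 < B)
    (n : ℝ → ℝ) (hfeas : LPfeasible S N B n)
    (hopt : ∀ m : ℝ → ℝ, LPfeasible S N B m →
      ∑ c ∈ S, n c / p c ≤ ∑ c ∈ S, m c / p c)
    (c₁ c₂ : ℝ) (hc₁ : c₁ ∈ S) (hc₂ : c₂ ∈ S) (hlt : c₁ < c₂)
    (hsupp : S.filter (fun c => n c ≠ 0) = {c₁, c₂}) :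
    ∀ c ∈ S, ∀ t : ℝ, c = t * c₁ + (1 - t) * c₂ →
      1 / p c ≥ t / p c₁ + (1 - t) / p c₂ := by
  intro c hc t ht
  have hne : c₂ - c₁ ≠ 0 := by linarith
  -- trivial cases c = c₁ or c = c₂
  by_cases h1 : c = c₁
  · have : t = 1 := by
      have : (1 - t) * (c₂ - c₁) = 0 := by rw [h1] at ht; ring_nf; nlinarith [ht]
      rcases mul_eq_zero.mp this with h | h
      · linarith
      · exact absurd h hne
    rw [h1, this]; simp
  · by_cases h2 : c = c₂
    · have : t = 0 := by
        have : t * (c₂ - c₁) = 0 := by rw [h2] at ht; nlinarith [ht]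
        rcases mul_eq_zero.mp this with h | h
        · exact h
        · exact absurd h hne
      rw [h2, this]; simp
    · -- main case
      obtain ⟨hnn, hsum, hcost⟩ := hfeas
      have hn1 : 0 < n c₁ := by
        have : c₁ ∈ S.filter (fun c => n c ≠ 0) := by
          rw [hsupp]; simp
        have := (Finset.mem_filter.mp this).2
        exact lt_of_le_of_ne (hnn c₁ hc₁) (Ne.symm this)
      have hn2 : 0 < n c₂ := by
        have : c₂ ∈ S.filter (fun c => n c ≠ 0) := by
          rw [hsupp]; simp
        have := (Finset.mem_filter.mp this).2
        exact lt_of_le_of_ne (hnn c₂ hc₂) (Ne.symm this)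
      set ε : ℝ := min (n c₁ / (|t| + 1)) (n c₂ / (|1 - t| + 1)) with hε
      have habs1 : (0:ℝ) < |t| + 1 := by positivity
      have habs2 : (0:ℝ) < |1 - t| + 1 := by positivity
      have hεpos : 0 < ε := lt_min (by positivity) (by positivity)
      have hε1 : ε * t ≤ n c₁ := by
        have h := min_le_left (n c₁ / (|t| + 1)) (n c₂ / (|1 - t| + 1))
        have := le_abs_self t
        have h2 : ε * |t| ≤ n c₁ / (|t| + 1) * |t| := by
          apply mul_le_mul_of_nonneg_right h (abs_nonneg t)
        have h3 : n c₁ / (|t| + 1) * |t| ≤ n c₁ := by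
          rw [div_mul_eq_mul_div, div_le_iff₀ habs1]
          nlinarith [abs_nonneg t]
        nlinarith [abs_nonneg t, hεpos]
      have hε2 : ε * (1 - t) ≤ n c₂ := by
        have h := min_le_right (n c₁ / (|t| + 1)) (n c₂ / (|1 - t| + 1))
        have := le_abs_self (1 - t)
        have h2 : ε * |1 - t| ≤ n c₂ / (|1 - t| + 1) * |1 - t| := by
          apply mul_le_mul_of_nonneg_right h (abs_nonneg _)
        have h3 : n c₂ / (|1 - t| + 1) * |1 - t| ≤ n c₂ := by
          rw [div_mul_eq_mul_div, div_le_iff₀ habs2]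
          nlinarith [abs_nonneg (1 - t)]
        nlinarith [abs_nonneg (1 - t), hεpos]
      set w : ℝ → ℝ := fun x =>
        (if x = c then (1:ℝ) else 0) - t * (if x = c₁ then 1 else 0)
          - (1 - t) * (if x = c₂ then 1 else 0) with hw
      set m : ℝ → ℝ := fun x => n x + ε * w x with hm
      have hc1c2 : c₁ ≠ c₂ := ne_of_lt hlt
      have hwc : w c = 1 := by simp [hw, h1, h2]
      have hwc1 : w c₁ = -t := by
        simp [hw, Ne.symm h1, hc1c2]
      have hwc2 : w c₂ = -(1 - t) := by
        simp [hw, Ne.symm h2, Ne.symm hc1c2]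
      have hwother : ∀ x, x ≠ c → x ≠ c₁ → x ≠ c₂ → w x = 0 := by
        intro x hx1 hx2 hx3; simp [hw, hx1, hx2, hx3]
      -- sums of w
      have hsumw : ∑ x ∈ S, w x = 0 := by
        simp only [hw, Finset.sum_sub_distrib, ← Finset.mul_sum,
          Finset.sum_ite_eq' S, hc, hc₁, hc₂, if_pos]
        ring
      have hsumwx : ∑ x ∈ S, w x * x = 0 := by
        have : ∀ x ∈ S, w x * x =
            (if x = c then x else 0) - t * (if x = c₁ then x else 0)
              - (1 - t) * (if x = c₂ then x else 0) := by
          intro x _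
          by_cases e1 : x = c <;> by_cases e2 : x = c₁ <;> by_cases e3 : x = c₂ <;>
            simp [hw, e1, e2, e3, h1, h2, hc1c2, Ne.symm h1, Ne.symm h2,
              Ne.symm hc1c2] <;> ring
        rw [Finset.sum_congr rfl this]
        simp only [Finset.sum_sub_distrib, ← Finset.mul_sum,
          Finset.sum_ite_eq' S, hc, hc₁, hc₂, if_pos]
        linarith [ht]
      have hsumwp : ∑ x ∈ S, w x / p x = 1 / p c - t / p c₁ - (1 - t) / p c₂ := by
        have : ∀ x ∈ S, w x / p x =
            (if x = c then 1 / p x else 0) - t * (if x = c₁ then 1 / p x else 0)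
              - (1 - t) * (if x = c₂ then 1 / p x else 0) := by
          intro x _
          by_cases e1 : x = c <;> by_cases e2 : x = c₁ <;> by_cases e3 : x = c₂ <;>
            simp [hw, e1, e2, e3, h1, h2, hc1c2, Ne.symm h1, Ne.symm h2,
              Ne.symm hc1c2, sub_div, mul_div_assoc] <;> ring
        rw [Finset.sum_congr rfl this]
        simp only [Finset.sum_sub_distrib, ← Finset.mul_sum,
          Finset.sum_ite_eq' S, hc, hc₁, hc₂, if_pos]
        ring
      -- feasibility of m
      have hmfeas : LPfeasible S N B m := by
        refine ⟨?_, ?_, ?_⟩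
        · intro x hx
          by_cases e1 : x = c
          · subst e1; rw [hm]; simp only [hwc]
            have := hnn x hx; linarith
          · by_cases e2 : x = c₁
            · subst e2; rw [hm]; simp only [hwc1]; nlinarith
            · by_cases e3 : x = c₂
              · subst e3; rw [hm]; simp only [hwc2]; nlinarith
              · rw [hm]; simp only [hwother x e1 e2 e3, mul_zero, add_zero]
                exact hnn x hx
        · rw [show (∑ x ∈ S, m x) = ∑ x ∈ S, n x + ε * ∑ x ∈ S, w x by
            simp [hm, Finset.sum_add_distrib, Finset.mul_sum], hsumw, hsum]
          ring
        · calc ∑ x ∈ S, m x * x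
              = ∑ x ∈ S, n x * x + ε * ∑ x ∈ S, w x * x := by
                simp [hm, Finset.mul_sum, add_mul, Finset.sum_add_distrib, mul_assoc]
            _ ≤ B := by rw [hsumwx]; simpa using hcost
      -- optimality
      have hobj : ∑ x ∈ S, m x / p x
          = ∑ x ∈ S, n x / p x + ε * ∑ x ∈ S, w x / p x := by
        simp [hm, add_div, Finset.sum_add_distrib, Finset.mul_sum, mul_div_assoc]
      have hle := hopt m hmfeas
      rw [hobj, hsumwp] at hle
      have h0 : 0 ≤ ε * (1 / p c - t / p c₁ - (1 - t) / p c₂) := by linarith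
      have hD := nonneg_of_mul_nonneg_right h0 hεpos
      linarith
end

section
/- Let n* be an optimal feasible solution of the LP: minimize ∑_c n_c / p(c) subject to ∑_c n_c = N, ∑_c n_c c ≤ B, n_c ≥ 0. Let c₁ = min{c : n*_c > 0} and c₂ = max{c : n*_c > 0}. Define n'_{c₁} = ∑_{c₁ ≤ c ≤ c₂} n*_c (c₂ - c)/(c₂ - c₁), n'_{c₂} = ∑_{c₁ ≤ c ≤ c₂} n*_c (c - c₁)/(c₂ - c₁), and n'_c = 0 otherwise. If for every c ∈ [c₁, c₂] ∩ S we have 1/p(c) ≥ ((c₂ - c)/(c₂ - c₁)) · 1/p(c₁) + ((c - c₁)/(c₂ - c₁)) · 1/p(c₂), then n' is feasible and ∑_c n'_c / p(c) ≤ ∑_c n*_c / p(c). -/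
/-- Moving all the mass of an optimal solution n* onto the extreme support
    prices c₁ = min supp, c₂ = max supp (by the convex-combination weights)
    yields a feasible solution n' that is at least as good, provided 1/p is
    below-the-chord on [c₁, c₂] ∩ S. -/
theorem lp_two_point_transfer (S : Finset ℝ) (hS : ∀ c ∈ S, 0 < c)
    (p : ℝ → ℝ) (hp : ∀ c ∈ S, 0 < p c ∧ p c ≤ 1)
    (N B : ℝ) (hN : 0 < N) (hB : 0 < B)
    (nstar : ℝ → ℝ) (hfeas : LPfeasible S N B nstar)
    (hopt : ∀ m : ℝ → ℝ, LPfeasible S N B m →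
      ∑ c ∈ S, nstar c / p c ≤ ∑ c ∈ S, m c / p c)
    (c₁ c₂ : ℝ) (hc₁ : c₁ ∈ S) (hc₂ : c₂ ∈ S) (hlt : c₁ < c₂)
    (hn₁ : 0 < nstar c₁) (hn₂ : 0 < nstar c₂)
    (hmin : ∀ c ∈ S, 0 < nstar c → c₁ ≤ c)
    (hmax : ∀ c ∈ S, 0 < nstar c → c ≤ c₂)
    (hchord : ∀ c ∈ S, c₁ ≤ c → c ≤ c₂ →
      1 / p c ≥ (c₂ - c) / (c₂ - c₁) * (1 / p c₁) + (c - c₁) / (c₂ - c₁) * (1 / p c₂))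
    (n' : ℝ → ℝ)
    (hn' : ∀ c, n' c =
      if c = c₁ then
        ∑ d ∈ S.filter (fun d => c₁ ≤ d ∧ d ≤ c₂), nstar d * (c₂ - d) / (c₂ - c₁)
      else if c = c₂ then
        ∑ d ∈ S.filter (fun d => c₁ ≤ d ∧ d ≤ c₂), nstar d * (d - c₁) / (c₂ - c₁)
      else 0) :
    LPfeasible S N B n' ∧ ∑ c ∈ S, n' c / p c ≤ ∑ c ∈ S, nstar c / p c := by
  obtain ⟨hpos, hsum, hcost⟩ := hfeas
  have hden : (0:ℝ) < c₂ - c₁ := sub_pos.2 hlt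
  have hdne : c₂ - c₁ ≠ 0 := ne_of_gt hden
  have hne : c₁ ≠ c₂ := ne_of_lt hlt
  set T := S.filter (fun d => c₁ ≤ d ∧ d ≤ c₂) with hT
  have hTS : T ⊆ S := Finset.filter_subset _ _
  have hzero : ∀ d ∈ S, d ∉ T → nstar d = 0 := by
    intro d hd hdT
    by_contra h
    have hpos' : 0 < nstar d := lt_of_le_of_ne (hpos d hd) (Ne.symm h)
    exact hdT (Finset.mem_filter.2 ⟨hd, hmin d hd hpos', hmax d hd hpos'⟩)
  have hTsum : ∀ f : ℝ → ℝ, ∑ d ∈ T, nstar d * f d = ∑ d ∈ S, nstar d * f d := by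
    intro f
    apply Finset.sum_subset hTS
    intro d hd hdT
    rw [hzero d hd hdT]; ring
  have hn'1 : n' c₁ = ∑ d ∈ T, nstar d * (c₂ - d) / (c₂ - c₁) := by
    rw [hn']; simp [hT]
  have hn'2 : n' c₂ = ∑ d ∈ T, nstar d * (d - c₁) / (c₂ - c₁) := by
    rw [hn', if_neg (Ne.symm hne), if_pos rfl]
  have hn'0 : ∀ c, c ≠ c₁ → c ≠ c₂ → n' c = 0 := by
    intro c h1 h2; rw [hn', if_neg h1, if_neg h2]
  -- two-point sums over S
  have hpair : ({c₁, c₂} : Finset ℝ) ⊆ S := by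
    intro x hx
    rcases Finset.mem_insert.1 hx with h | h
    · exact h ▸ hc₁
    · exact (Finset.mem_singleton.1 h) ▸ hc₂
  have hsplit : ∀ f : ℝ → ℝ, ∑ c ∈ S, n' c * f c = n' c₁ * f c₁ + n' c₂ * f c₂ := by
    intro f
    rw [← Finset.sum_subset hpair (by
      intro x _ hx
      simp only [Finset.mem_insert, Finset.mem_singleton, not_or] at hx
      rw [hn'0 x hx.1 hx.2]; ring)]
    rw [Finset.sum_pair hne]
  -- nonnegativity
  have hnn : ∀ c ∈ S, 0 ≤ n' c := by
    intro c hc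
    rw [hn']
    split_ifs with h1 h2
    · refine Finset.sum_nonneg fun d hd => ?_
      obtain ⟨hdS, hd1, hd2⟩ := Finset.mem_filter.1 hd
      exact div_nonneg (mul_nonneg (hpos d hdS) (sub_nonneg.2 hd2)) hden.le
    · refine Finset.sum_nonneg fun d hd => ?_
      obtain ⟨hdS, hd1, hd2⟩ := Finset.mem_filter.1 hd
      exact div_nonneg (mul_nonneg (hpos d hdS) (sub_nonneg.2 hd1)) hden.le
    · exact le_refl 0
  -- sum = N
  have hsum' : ∑ c ∈ S, n' c = N := by
    have h1 : ∑ c ∈ S, n' c = ∑ c ∈ S, n' c * 1 := by simp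
    rw [h1, hsplit, hn'1, hn'2, mul_one, mul_one, ← Finset.sum_add_distrib]
    have : ∀ d ∈ T, nstar d * (c₂ - d) / (c₂ - c₁) + nstar d * (d - c₁) / (c₂ - c₁)
        = nstar d * 1 := by
      intro d _; field_simp; ring
    rw [Finset.sum_congr rfl this, hTsum]
    simpa using hsum
  -- cost ≤ B
  have hcost' : ∑ c ∈ S, n' c * c ≤ B := by
    rw [hsplit (fun c => c), hn'1, hn'2, Finset.sum_mul, Finset.sum_mul,
      ← Finset.sum_add_distrib]
    have : ∀ d ∈ T, nstar d * (c₂ - d) / (c₂ - c₁) * c₁ + nstar d * (d - c₁) / (c₂ - c₁) * c₂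
        = nstar d * d := by
      intro d _; field_simp; ring
    rw [Finset.sum_congr rfl this, hTsum (fun d => d)]
    exact hcost
  refine ⟨⟨hnn, hsum', hcost'⟩, ?_⟩
  -- objective
  have hobj : ∑ c ∈ S, n' c / p c
      = ∑ d ∈ T, nstar d * ((c₂ - d) / (c₂ - c₁) * (1 / p c₁) + (d - c₁) / (c₂ - c₁) * (1 / p c₂)) := by
    have h1 : ∑ c ∈ S, n' c / p c = ∑ c ∈ S, n' c * (1 / p c) := by
      refine Finset.sum_congr rfl fun c _ => ?_; rw [mul_one_div]
    rw [h1, hsplit (fun c => 1 / p c), hn'1, hn'2, Finset.sum_mul, Finset.sum_mul,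
      ← Finset.sum_add_distrib]
    refine Finset.sum_congr rfl fun d _ => ?_
    ring
  rw [hobj]
  calc ∑ d ∈ T, nstar d * ((c₂ - d) / (c₂ - c₁) * (1 / p c₁) + (d - c₁) / (c₂ - c₁) * (1 / p c₂))
      ≤ ∑ d ∈ T, nstar d * (1 / p d) := by
        refine Finset.sum_le_sum fun d hd => ?_
        obtain ⟨hdS, hd1, hd2⟩ := Finset.mem_filter.1 hd
        exact mul_le_mul_of_nonneg_left (hchord d hdS hd1 hd2) (hpos d hdS)
    _ = ∑ d ∈ S, nstar d * (1 / p d) := hTsum _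
    _ = ∑ d ∈ S, nstar d / p d := by
        refine Finset.sum_congr rfl fun d _ => ?_; rw [mul_one_div]
end

section
/- Let n^L be an optimal solution of the relaxed LP (minimize ∑_c n_c / p(c), subject to ∑_c n_c = N, ∑_c n_c c ≤ B, n_c ≥ 0) supported on two prices c₁ < c₂ with 1/p(c₁) ≥ 1/p(c₂), and let n̂ be obtained by rounding: n̂_{c₁} = ⌈n^L_{c₁}⌉, n̂_{c₂} = N - n̂_{c₁}. Then for any integer-feasible solution n* of the IP (additionally requiring n_c ∈ ℕ), ∑_c n̂_c / p(c) ≤ ∑_c n*_c / p(c) + (1/p(c₁) - 1/p(c₂)). -/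
/-- Rounding guarantee: if n^L is an optimal LP solution supported on two
    prices c₁ < c₂ with 1/p(c₁) ≥ 1/p(c₂), and n̂ rounds n^L_{c₁} up (and
    puts the remaining N - ⌈n^L_{c₁}⌉ tasks at c₂), then for any
    integer-feasible solution n* of the IP,
    ∑ n̂_c/p(c) ≤ ∑ n*_c/p(c) + (1/p(c₁) - 1/p(c₂)). -/
theorem lp_rounding_guarantee (S : Finset ℝ) (hS : ∀ c ∈ S, 0 < c)
    (p : ℝ → ℝ) (hp : ∀ c ∈ S, 0 < p c ∧ p c ≤ 1)
    (N : ℕ) (hN : 0 < N) (B : ℝ) (hB : 0 < B)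
    (nL : ℝ → ℝ) (hfeasL : LPfeasible S (N : ℝ) B nL)
    (hoptL : ∀ m : ℝ → ℝ, LPfeasible S (N : ℝ) B m →
      ∑ c ∈ S, nL c / p c ≤ ∑ c ∈ S, m c / p c)
    (c₁ c₂ : ℝ) (hc₁ : c₁ ∈ S) (hc₂ : c₂ ∈ S) (hlt : c₁ < c₂)
    (hpp : 1 / p c₂ ≤ 1 / p c₁)
    (hsupp : ∀ c ∈ S, c ≠ c₁ → c ≠ c₂ → nL c = 0)
    (nhat : ℝ → ℝ)
    (hnhat : ∀ c, nhat c =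
      if c = c₁ then (⌈nL c₁⌉ : ℝ)
      else if c = c₂ then (N : ℝ) - (⌈nL c₁⌉ : ℝ)
      else 0)
    (hnhat_feas : LPfeasible S (N : ℝ) B nhat)
    (nstar : ℝ → ℝ) (hfeas_star : LPfeasible S (N : ℝ) B nstar)
    (hint_star : ∀ c ∈ S, ∃ k : ℕ, nstar c = (k : ℝ)) :
    ∑ c ∈ S, nhat c / p c ≤ ∑ c ∈ S, nstar c / p c + (1 / p c₁ - 1 / p c₂) := by
  have hne : c₁ ≠ c₂ := ne_of_lt hlt
  have hsub : ({c₁, c₂} : Finset ℝ) ⊆ S := by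
    intro x hx; simp only [Finset.mem_insert, Finset.mem_singleton] at hx
    rcases hx with rfl | rfl <;> assumption
  -- reduce sums to two terms
  have hsumL : ∑ c ∈ S, nL c / p c = nL c₁ / p c₁ + nL c₂ / p c₂ := by
    rw [← Finset.sum_subset hsub, Finset.sum_pair hne]
    intro x hx hx'
    simp only [Finset.mem_insert, Finset.mem_singleton, not_or] at hx'
    rw [hsupp x hx hx'.1 hx'.2, zero_div]
  have hsumhat : ∑ c ∈ S, nhat c / p c = nhat c₁ / p c₁ + nhat c₂ / p c₂ := by
    rw [← Finset.sum_subset hsub, Finset.sum_pair hne]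
    intro x hx hx'
    simp only [Finset.mem_insert, Finset.mem_singleton, not_or] at hx'
    rw [hnhat x, if_neg hx'.1, if_neg hx'.2, zero_div]
  have hNL : nL c₁ + nL c₂ = (N : ℝ) := by
    have := hfeasL.2.1
    rw [← Finset.sum_subset hsub, Finset.sum_pair hne] at this
    · exact this
    · intro x hx hx'
      simp only [Finset.mem_insert, Finset.mem_singleton, not_or] at hx'
      exact hsupp x hx hx'.1 hx'.2
  have hopt := hoptL nstar hfeas_star
  have hhat1 : nhat c₁ = (⌈nL c₁⌉ : ℝ) := by rw [hnhat c₁, if_pos rfl]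
  have hhat2 : nhat c₂ = (N : ℝ) - (⌈nL c₁⌉ : ℝ) := by
    rw [hnhat c₂, if_neg hne.symm, if_pos rfl]
  have hp1 := hp c₁ hc₁
  have hp2 := hp c₂ hc₂
  have hceil1 : nL c₁ ≤ (⌈nL c₁⌉ : ℝ) := Int.le_ceil _
  have hceil2 : (⌈nL c₁⌉ : ℝ) ≤ nL c₁ + 1 := by
    have := Int.ceil_lt_add_one (nL c₁); linarith
  have ha : 0 < 1 / p c₁ := div_pos one_pos hp1.1
  have hb : 0 < 1 / p c₂ := div_pos one_pos hp2.1
  -- goal via hopt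
  have key : ∑ c ∈ S, nhat c / p c ≤ ∑ c ∈ S, nL c / p c + (1 / p c₁ - 1 / p c₂) := by
    rw [hsumhat, hsumL, hhat1, hhat2]
    have h2 : nL c₂ = (N : ℝ) - nL c₁ := by linarith
    rw [h2]
    have e1 : ∀ x y : ℝ, x / p c₁ = x * (1 / p c₁) := by intro x y; field_simp
    set a := 1 / p c₁
    set b := 1 / p c₂
    have ea : ∀ x : ℝ, x / p c₁ = x * a := by intro x; rw [div_eq_mul_one_div]
    have eb : ∀ x : ℝ, x / p c₂ = x * b := by intro x; rw [div_eq_mul_one_div]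
    rw [ea, ea, eb, eb]
    nlinarith [mul_nonneg (sub_nonneg.2 hceil1) (sub_nonneg.2 hpp)]
  linarith
end
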